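/- arXiv:2401.11580 — 3 statements merged into one kernel-verified Lean document; each statement's English description precedes it below -/
import Mathlib

section
/- Let ℓ ≥ 1 be a fixed integer. There exist constants 0 < c ≤ C (depending on ℓ, λ_e and λ) such that for all sufficiently large n, in the complete bipartite graph K_{L,R} with |L| = ℓ and |R| = n − ℓ, every vertex j ∈ R satisfies c·n ≤ v_{K_{L,R}}(j) ≤ C·n. -/
open Finset
open scoped Classical

/-- Transmission rate from node `i` into the set `S`: `λ·|N(i) ∩ S|/deg(i)`,
interpreted as `0` when `deg(i) = 0`. -/
noncomputable def rate {n : ℕ} (lam : ℝ) (G : SimpleGraph (Fin n))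
    (S : Finset (Fin n)) (i : Fin n) : ℝ :=
  if G.degree i = 0 then 0
  else lam * ((G.neighborFinset i ∩ S).card : ℝ) / (G.degree i : ℝ)

/-- The version age `v_G(S)`, defined by downward recursion on `n - |S|`. -/
noncomputable def vAge (lam_e lam : ℝ) {n : ℕ} (G : SimpleGraph (Fin n))
    (S : Finset (Fin n)) : ℝ :=
  (lam_e + ∑ i ∈ Sᶜ.attach, rate lam G S i.1 * vAge lam_e lam G (insert i.1 S)) /
    (lam * (S.card : ℝ) / (n : ℝ) + ∑ i ∈ Sᶜ, rate lam G S i)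
termination_by Sᶜ.card
decreasing_by
  have hi := i.2
  rw [Finset.compl_insert]
  exact Finset.card_erase_lt_of_mem hi

/-- The complete bipartite graph on `Fin n` whose left part consists of the
first `L` vertices. -/
def biGraph (n L : ℕ) : SimpleGraph (Fin n) where
  Adj i j := (i.val < L) ≠ (j.val < L)
  symm := ⟨fun _ _ h => Ne.symm h⟩
  loopless := ⟨fun _ h => h rfl⟩

/-- Canonical subset of `K_{L,R}` with `i` left vertices and `j` right vertices. -/
def canonSet (n L i j : ℕ) : Finset (Fin n) :=
  ({v | v.val < i} : Finset (Fin n)) ∪ ({v | L ≤ v.val ∧ v.val < L + j} : Finset (Fin n))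

/-- `u(i,j) = (λ/λ_e)·v(i,j)` for the complete bipartite graph `K_{L, n-L}`. -/
noncomputable def uIJ (lam_e lam : ℝ) (n L i j : ℕ) : ℝ :=
  (lam / lam_e) * vAge lam_e lam (biGraph n L) (canonSet n L i j)

/-- The number of edges of `G` with exactly one endpoint in `S`. -/
noncomputable def edgeBoundary {n : ℕ} (G : SimpleGraph (Fin n)) (S : Finset (Fin n)) : ℕ :=
  ∑ i ∈ S, ((G.neighborFinset i).filter fun j => j ∉ S).card

/-- The probability, under the Erdős–Rényi measure `G(n,p)`, of a set `A` of graphs. -/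
noncomputable def erProb (n : ℕ) (p : ℝ) (A : Finset (SimpleGraph (Fin n))) : ℝ :=
  ∑ G ∈ A, p ^ G.edgeFinset.card * (1 - p) ^ (n.choose 2 - G.edgeFinset.card)

lemma rate_nonneg {n : ℕ} {lam : ℝ} (hlam : 0 ≤ lam) (G : SimpleGraph (Fin n))
    (S : Finset (Fin n)) (i : Fin n) : 0 ≤ rate lam G S i := by
  unfold rate
  split
  · exact le_refl 0
  · positivity

lemma vAge_ge (lam_e lam : ℝ) (he : 0 < lam_e) (hl : 0 < lam) {n : ℕ} (hn : 0 < n)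
    (G : SimpleGraph (Fin n)) :
    ∀ (k : ℕ) (S : Finset (Fin n)), Sᶜ.card = k → S.Nonempty →
      lam_e / lam ≤ vAge lam_e lam G S := by
  intro k
  induction k using Nat.strong_induction_on with
  | _ k ih =>
    intro S hk hS
    rw [vAge]
    have hcard : (0:ℝ) < S.card := by exact_mod_cast hS.card_pos
    have hnR : (0:ℝ) < n := by exact_mod_cast hn
    have hD0 : 0 < lam * S.card / n := by positivity
    have hR : 0 ≤ ∑ i ∈ Sᶜ, rate lam G S i :=
      Finset.sum_nonneg fun i _ => rate_nonneg hl.le G S i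
    have hT : lam_e / lam * (∑ i ∈ Sᶜ, rate lam G S i) ≤
        ∑ i ∈ Sᶜ.attach, rate lam G S i.1 * vAge lam_e lam G (insert i.1 S) := by
      rw [← Finset.sum_attach Sᶜ (rate lam G S), Finset.mul_sum]
      refine Finset.sum_le_sum fun i _ => ?_
      have hlt : ((insert i.1 S)ᶜ).card < k := by
        rw [Finset.compl_insert]
        rw [← hk]
        exact Finset.card_erase_lt_of_mem i.2
      have := ih _ hlt (insert i.1 S) rfl (Finset.insert_nonempty _ _)
      rw [mul_comm (lam_e / lam)]
      exact mul_le_mul_of_nonneg_left this (rate_nonneg hl.le G S i.1)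
    rw [le_div_iff₀ (by positivity)]
    have h1 : lam_e / lam * (lam * S.card / n) = lam_e * S.card / n := by
      field_simp
    have h2 : lam_e * S.card / n ≤ lam_e := by
      rw [div_le_iff₀ hnR]
      have : (S.card : ℝ) ≤ n := by
        have := Finset.card_le_univ S
        simp only [Finset.card_univ, Fintype.card_fin] at this
        exact_mod_cast this
      nlinarith
    calc lam_e / lam * (lam * S.card / n + ∑ i ∈ Sᶜ, rate lam G S i)
        = lam_e / lam * (lam * S.card / n) + lam_e / lam * (∑ i ∈ Sᶜ, rate lam G S i) := by ring
      _ ≤ lam_e + ∑ i ∈ Sᶜ.attach, rate lam G S i.1 * vAge lam_e lam G (insert i.1 S) := by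
          rw [h1]; exact add_le_add h2 hT

lemma vAge_le (lam_e lam : ℝ) (he : 0 < lam_e) (hl : 0 < lam) {n : ℕ} (hn : 0 < n)
    (G : SimpleGraph (Fin n)) :
    ∀ (k : ℕ) (S : Finset (Fin n)), Sᶜ.card = k → S.Nonempty →
      vAge lam_e lam G S ≤ lam_e * n / (lam * S.card) := by
  intro k
  induction k using Nat.strong_induction_on with
  | _ k ih =>
    intro S hk hS
    rw [vAge]
    have hcard : (0:ℝ) < S.card := by exact_mod_cast hS.card_pos
    have hnR : (0:ℝ) < n := by exact_mod_cast hn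
    set M := lam_e * n / (lam * S.card) with hM
    have hMpos : 0 < M := by positivity
    have hR : 0 ≤ ∑ i ∈ Sᶜ, rate lam G S i :=
      Finset.sum_nonneg fun i _ => rate_nonneg hl.le G S i
    have hT : ∑ i ∈ Sᶜ.attach, rate lam G S i.1 * vAge lam_e lam G (insert i.1 S) ≤
        M * (∑ i ∈ Sᶜ, rate lam G S i) := by
      rw [← Finset.sum_attach Sᶜ (rate lam G S), Finset.mul_sum]
      refine Finset.sum_le_sum fun i _ => ?_
      have hlt : ((insert i.1 S)ᶜ).card < k := by
        rw [Finset.compl_insert, ← hk]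
        exact Finset.card_erase_lt_of_mem i.2
      have hv := ih _ hlt (insert i.1 S) rfl (Finset.insert_nonempty _ _)
      have hcins : ((insert i.1 S).card : ℝ) = S.card + 1 := by
        rw [Finset.card_insert_of_notMem (Finset.mem_compl.mp i.2)]
        push_cast; ring
      have hle : lam_e * n / (lam * (insert i.1 S).card) ≤ M := by
        rw [hM, hcins]
        apply div_le_div_of_nonneg_left (by positivity) (by positivity)
        nlinarith
      rw [mul_comm M]
      exact mul_le_mul_of_nonneg_left (hv.trans hle) (rate_nonneg hl.le G S i.1)
    rw [div_le_iff₀ (by positivity)]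
    have hMD0 : M * (lam * S.card / n) = lam_e := by
      rw [hM]; field_simp
    calc lam_e + ∑ i ∈ Sᶜ.attach, rate lam G S i.1 * vAge lam_e lam G (insert i.1 S)
        ≤ lam_e + M * (∑ i ∈ Sᶜ, rate lam G S i) := by linarith
      _ = M * (lam * S.card / n + ∑ i ∈ Sᶜ, rate lam G S i) := by
          rw [mul_add, hMD0]


lemma card_left_le (n ℓ : ℕ) :
    (Finset.univ.filter (fun v : Fin n => v.val < ℓ)).card ≤ ℓ := by
  have h := Finset.card_le_card_of_injOn
    (s := Finset.univ.filter (fun v : Fin n => v.val < ℓ)) (t := Finset.range ℓ)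
    (fun v : Fin n => v.val)
    (fun v hv => by simpa using (Finset.mem_filter.mp hv).2)
    (fun a _ b _ h => Fin.val_injective h)
  simpa using h

lemma deg_left_ge {n ℓ : ℕ} (hℓn : ℓ ≤ n) {i : Fin n} (hi : i.val < ℓ) :
    n - ℓ ≤ (biGraph n ℓ).degree i := by
  have hsub : Finset.univ.filter (fun v : Fin n => ¬ v.val < ℓ) ⊆
      (biGraph n ℓ).neighborFinset i := by
    intro v hv
    simp only [Finset.mem_filter] at hv
    rw [SimpleGraph.mem_neighborFinset]
    show (i.val < ℓ) ≠ (v.val < ℓ)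
    intro h
    exact hv.2 (h ▸ hi)
  have hcards := Finset.card_filter_add_card_filter_not
    (s := (Finset.univ : Finset (Fin n))) (p := fun v : Fin n => v.val < ℓ)
  simp only [Finset.card_univ, Fintype.card_fin] at hcards
  have h1 := card_left_le n ℓ
  have h2 : (Finset.univ.filter (fun v : Fin n => ¬ v.val < ℓ)).card ≤
      (biGraph n ℓ).degree i := Finset.card_le_card hsub
  omega

lemma not_adj_right {n ℓ : ℕ} {i j : Fin n} (hi : ¬ i.val < ℓ) (hj : ℓ ≤ j.val) :
    ¬ (biGraph n ℓ).Adj i j := by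
  intro h
  exact h (propext (iff_of_false hi (by omega)))

lemma rate_right {n ℓ : ℕ} {lam : ℝ} {i j : Fin n} (hi : ¬ i.val < ℓ) (hj : ℓ ≤ j.val) :
    rate lam (biGraph n ℓ) {j} i = 0 := by
  unfold rate
  split
  · rfl
  · have hnot : j ∉ (biGraph n ℓ).neighborFinset i := by
      rw [SimpleGraph.mem_neighborFinset]; exact not_adj_right hi hj
    rw [Finset.inter_singleton_of_notMem hnot]
    simp

lemma rate_left_le {n ℓ : ℕ} {lam : ℝ} (hlam : 0 < lam) (hℓn : ℓ < n) {i j : Fin n}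
    (hi : i.val < ℓ) :
    rate lam (biGraph n ℓ) {j} i ≤ lam / ((n - ℓ : ℕ) : ℝ) := by
  have hpos : (0:ℝ) < ((n - ℓ : ℕ) : ℝ) := by
    have : 0 < n - ℓ := by omega
    exact_mod_cast this
  unfold rate
  split
  · positivity
  · have hd : ((n - ℓ : ℕ) : ℝ) ≤ ((biGraph n ℓ).degree i : ℝ) := by
      exact_mod_cast deg_left_ge hℓn.le hi
    have hc : ((((biGraph n ℓ).neighborFinset i) ∩ {j}).card : ℝ) ≤ 1 := by
      have := Finset.card_le_card
        (show (biGraph n ℓ).neighborFinset i ∩ {j} ⊆ {j} from Finset.inter_subset_right)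
      simpa using this
    have hac : lam * ((((biGraph n ℓ).neighborFinset i) ∩ {j}).card : ℝ) ≤ lam := by
      nlinarith
    have := div_le_div₀ hlam.le hac hpos hd
    simpa using this


/-- For fixed `ℓ ≥ 1`, in `K_{ℓ, n-ℓ}` every right vertex has
version age `Θ(n)`. -/
theorem stmt_0 (lam_e lam : ℝ) (hlam_e : 0 < lam_e) (hlam : 0 < lam)
    (ℓ : ℕ) (hℓ : 1 ≤ ℓ) :
    ∃ c C : ℝ, 0 < c ∧ c ≤ C ∧ ∃ N : ℕ, ∀ n : ℕ, N ≤ n → ∀ j : Fin n, ℓ ≤ j.val →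
      c * n ≤ vAge lam_e lam (biGraph n ℓ) {j} ∧
      vAge lam_e lam (biGraph n ℓ) {j} ≤ C * n := by
  refine ⟨lam_e / ((2 * (ℓ:ℝ) + 1) * lam), lam_e / lam, by positivity, ?_, 2 * ℓ, ?_⟩
  · apply div_le_div_of_nonneg_left hlam_e.le hlam
    nlinarith [Nat.one_le_cast (α := ℝ) |>.mpr hℓ]
  intro n hn j hj
  have hℓn : ℓ < n := by omega
  have hn0 : 0 < n := by omega
  have hnR : (0:ℝ) < n := by exact_mod_cast hn0
  have hℓR : (1:ℝ) ≤ (ℓ:ℝ) := by exact_mod_cast hℓ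
  have h2ℓ : 2 * (ℓ:ℝ) ≤ (n:ℝ) := by exact_mod_cast hn
  have hsubR : ((n - ℓ : ℕ) : ℝ) = (n:ℝ) - (ℓ:ℝ) := by
    rw [Nat.cast_sub hℓn.le]
  have hpos : (0:ℝ) < ((n - ℓ : ℕ) : ℝ) := by rw [hsubR]; linarith
  constructor
  · -- lower bound
    rw [vAge]
    set S : Finset (Fin n) := {j} with hSdef
    have hT : 0 ≤ ∑ i ∈ Sᶜ.attach,
        rate lam (biGraph n ℓ) S i.1 * vAge lam_e lam (biGraph n ℓ) (insert i.1 S) := by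
      refine Finset.sum_nonneg fun i _ => mul_nonneg (rate_nonneg hlam.le _ _ _) ?_
      have := vAge_ge lam_e lam hlam_e hlam hn0 (biGraph n ℓ) _ (insert i.1 S) rfl
        (Finset.insert_nonempty _ _)
      have h0 : (0:ℝ) ≤ lam_e / lam := by positivity
      linarith
    have hRle : ∑ i ∈ Sᶜ, rate lam (biGraph n ℓ) S i ≤ (ℓ:ℝ) * (lam / ((n - ℓ : ℕ) : ℝ)) := by
      have hb : ∀ i : Fin n, rate lam (biGraph n ℓ) S i ≤
          (if i.val < ℓ then lam / ((n - ℓ : ℕ) : ℝ) else 0) := by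
        intro i
        by_cases hi : i.val < ℓ
        · simpa [hi] using rate_left_le hlam hℓn (j := j) hi
        · simp only [hi, if_false]
          rw [hSdef, rate_right hi hj]
      calc ∑ i ∈ Sᶜ, rate lam (biGraph n ℓ) S i
          ≤ ∑ i ∈ Sᶜ, (if i.val < ℓ then lam / ((n - ℓ : ℕ) : ℝ) else 0) :=
            Finset.sum_le_sum fun i _ => hb i
        _ ≤ ∑ i ∈ (Finset.univ : Finset (Fin n)), (if i.val < ℓ then lam / ((n - ℓ : ℕ) : ℝ) else 0) := by
            refine Finset.sum_le_sum_of_subset_of_nonneg (Finset.subset_univ _) ?_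
            intro i _ _
            split
            · positivity
            · exact le_refl 0
        _ = ((Finset.univ.filter (fun v : Fin n => v.val < ℓ)).card : ℝ) *
              (lam / ((n - ℓ : ℕ) : ℝ)) := by
            rw [Finset.sum_ite, Finset.sum_const_zero, add_zero, Finset.sum_const,
              nsmul_eq_mul]
        _ ≤ (ℓ:ℝ) * (lam / ((n - ℓ : ℕ) : ℝ)) := by
            have := card_left_le n ℓ
            have hcl : ((Finset.univ.filter (fun v : Fin n => v.val < ℓ)).card : ℝ) ≤ (ℓ:ℝ) := by
              exact_mod_cast this
            have hq : (0:ℝ) ≤ lam / ((n - ℓ : ℕ) : ℝ) := by positivity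
            nlinarith
    have hR0 : 0 ≤ ∑ i ∈ Sᶜ, rate lam (biGraph n ℓ) S i :=
      Finset.sum_nonneg fun i _ => rate_nonneg hlam.le _ _ _
    have hcard : ((S.card : ℕ) : ℝ) = 1 := by rw [hSdef]; simp
    have hDle : lam * (S.card : ℝ) / n + ∑ i ∈ Sᶜ, rate lam (biGraph n ℓ) S i ≤
        (2 * (ℓ:ℝ) + 1) * lam / n := by
      have key : (ℓ:ℝ) * (lam / ((n - ℓ : ℕ) : ℝ)) ≤ 2 * (ℓ:ℝ) * lam / n := by
        rw [hsubR, mul_div_assoc']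
        rw [div_le_div_iff₀ (by linarith) hnR]
        nlinarith [mul_nonneg (mul_nonneg (by linarith : (0:ℝ) ≤ (ℓ:ℝ)) hlam.le)
          (by linarith : (0:ℝ) ≤ (n:ℝ) - 2 * (ℓ:ℝ))]
      rw [hcard]
      have : lam * 1 / n + 2 * (ℓ:ℝ) * lam / n = (2 * (ℓ:ℝ) + 1) * lam / n := by ring
      linarith
    have hDpos : 0 < lam * (S.card : ℝ) / n + ∑ i ∈ Sᶜ, rate lam (biGraph n ℓ) S i := by
      rw [hcard]
      have : 0 < lam * 1 / n := by positivity
      linarith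
    calc lam_e / ((2 * (ℓ:ℝ) + 1) * lam) * n
        = lam_e / ((2 * (ℓ:ℝ) + 1) * lam / n) := by
          rw [div_mul_eq_mul_div, div_div_eq_mul_div]
      _ ≤ (lam_e + ∑ i ∈ Sᶜ.attach, rate lam (biGraph n ℓ) S i.1 *
            vAge lam_e lam (biGraph n ℓ) (insert i.1 S)) /
          (lam * (S.card : ℝ) / n + ∑ i ∈ Sᶜ, rate lam (biGraph n ℓ) S i) :=
          div_le_div₀ (by linarith) (by linarith) hDpos hDle
  · -- upper bound
    have h := vAge_le lam_e lam hlam_e hlam hn0 (biGraph n ℓ) _ {j} rfl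
      (Finset.singleton_nonempty j)
    have hcard : ((({j} : Finset (Fin n)).card : ℕ) : ℝ) = 1 := by simp
    rw [hcard] at h
    calc vAge lam_e lam (biGraph n ℓ) {j} ≤ lam_e * n / (lam * 1) := h
      _ = lam_e / lam * n := by field_simp
end

section
/- Fix c₀ ∈ (0, 1/2). There exist constants c, C > 0 (depending on c₀, λ_e and λ) such that for all sufficiently large n, in the complete bipartite graph K_{L,R} with |L| = ⌊c₀·n⌋ and |R| = n − ⌊c₀·n⌋, every vertex j ∈ R satisfies c·log n ≤ v_{K_{L,R}}(j) ≤ C·log n. -/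
open Finset
open scoped Classical

lemma vAge_eq (lam_e lam : ℝ) {n : ℕ} (G : SimpleGraph (Fin n)) (S : Finset (Fin n)) :
    vAge lam_e lam G S = (lam_e + ∑ i ∈ Sᶜ, rate lam G S i * vAge lam_e lam G (insert i S)) /
    (lam * (S.card : ℝ) / (n : ℝ) + ∑ i ∈ Sᶜ, rate lam G S i) := by
  rw [vAge]
  congr 1
  congr 1
  exact Finset.sum_attach _ fun i => rate lam G S i * vAge lam_e lam G (insert i S)

lemma card_filter_lt (n L : ℕ) (hLn : L ≤ n) :
    (univ.filter fun w : Fin n => w.val < L).card = L := by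
  have : (univ.filter fun w : Fin n => w.val < L) = (univ : Finset (Fin L)).map (Fin.castLEEmb hLn) := by
    ext w
    simp only [mem_filter, mem_univ, true_and, mem_map, Fin.castLEEmb, Function.Embedding.coeFn_mk]
    constructor
    · intro h; exact ⟨⟨w.val, h⟩, by simp [Fin.castLE, Fin.ext_iff]⟩
    · rintro ⟨x, _, rfl⟩; exact x.2
  rw [this, card_map, card_univ, Fintype.card_fin]

lemma card_filter_not_lt (n L : ℕ) (hLn : L ≤ n) :
    (univ.filter fun w : Fin n => ¬ w.val < L).card = n - L := by
  have h := Finset.card_filter_add_card_filter_not (s := (univ : Finset (Fin n)))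
    (p := fun w : Fin n => w.val < L)
  rw [card_univ, Fintype.card_fin, card_filter_lt n L hLn] at h
  omega

lemma nbhd_left (n L : ℕ) (v : Fin n) (hv : v.val < L) :
    (biGraph n L).neighborFinset v = univ.filter fun w => ¬ (w.val < L) := by
  ext w; rw [SimpleGraph.mem_neighborFinset]; simp [biGraph, hv, eq_iff_iff]

lemma nbhd_right (n L : ℕ) (v : Fin n) (hv : ¬ v.val < L) :
    (biGraph n L).neighborFinset v = univ.filter fun w => w.val < L := by
  ext w; rw [SimpleGraph.mem_neighborFinset]; simp [biGraph, hv, eq_iff_iff]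

lemma degree_left (n L : ℕ) (hLn : L ≤ n) (v : Fin n) (hv : v.val < L) :
    (biGraph n L).degree v = n - L := by
  rw [← SimpleGraph.card_neighborFinset_eq_degree, nbhd_left n L v hv,
    card_filter_not_lt n L hLn]

lemma degree_right (n L : ℕ) (hLn : L ≤ n) (v : Fin n) (hv : ¬ v.val < L) :
    (biGraph n L).degree v = L := by
  rw [← SimpleGraph.card_neighborFinset_eq_degree, nbhd_right n L v hv,
    card_filter_lt n L hLn]

lemma inter_eq_filter {n : ℕ} (p : Fin n → Prop) [DecidablePred p] (S : Finset (Fin n)) :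
    univ.filter p ∩ S = S.filter p := by
  ext w; simp [mem_inter, mem_filter, and_comm]

lemma rate_left (lam : ℝ) (n L : ℕ) (hLn : L < n) (S : Finset (Fin n)) (v : Fin n)
    (hv : v.val < L) :
    rate lam (biGraph n L) S v
      = lam * ((S.filter fun w => ¬ w.val < L).card : ℝ) / ((n : ℝ) - L) := by
  rw [rate, degree_left n L hLn.le v hv, if_neg (by omega), nbhd_left n L v hv,
    inter_eq_filter, Nat.cast_sub hLn.le]

lemma rate_right_s3 (lam : ℝ) (n L : ℕ) (hL0 : 0 < L) (hLn : L ≤ n) (S : Finset (Fin n)) (v : Fin n)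
    (hv : ¬ v.val < L) :
    rate lam (biGraph n L) S v
      = lam * ((S.filter fun w => w.val < L).card : ℝ) / (L : ℝ) := by
  rw [rate, degree_right n L hLn v hv, if_neg (by omega), nbhd_right n L v hv,
    inter_eq_filter]

private lemma aux1 (lam_e lam β s : ℝ) (hlam : lam ≠ 0) (hβ : (0:ℝ) < β) (hs : (0:ℝ) < s) :
    lam_e / lam * (4 * β) * (1 / (s + 1)) * (lam * s / (2 * β)) = lam_e * (2 * s / (s + 1)) := by
  have h1 : s + 1 ≠ 0 := by positivity
  have h2 : β ≠ 0 := ne_of_gt hβ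
  field_simp
  ring

private lemma aux2 (lam_e lam μ : ℝ) (hlam : lam ≠ 0) (hμ : μ ≠ 0) :
    (lam_e / lam * (1 + 2 / μ)) * (lam * (μ / 2)) = lam_e * (μ / 2 + 1) := by
  field_simp

private lemma aux3 (lam_e lam β s n lr : ℝ) (hlam : lam ≠ 0) (hn : n ≠ 0)
    (hβ : (1:ℝ) + β ≠ 0) :
    (lam_e / lam * (1 / (1 + β) * lr)) * (lam * s / n)
      = (lam_e * (1 / (1 + β))) * (s / n * lr) := by
  field_simp

private lemma aux4 (lam_e lam β s : ℝ) (hlam : lam ≠ 0) (hs : s ≠ 0) (hβ : (1:ℝ) + β ≠ 0) :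
    (lam_e / lam * (1 / (1 + β)) * (1 / s)) * (lam * β * s) = lam_e * (1 / (1 + β)) * β := by
  field_simp

private lemma aux5 (lam_e β : ℝ) (hβ : (1:ℝ) + β ≠ 0) :
    lam_e * (1 / (1 + β)) + lam_e * (1 / (1 + β)) * β = lam_e := by
  field_simp

private lemma aux6 (L lam jS nL : ℝ) (hL : (0:ℝ) < nL) :
    L / 2 * (lam * jS / nL) = (L * (lam * jS)) / (2 * nL) := by
  have h : nL ≠ 0 := ne_of_gt hL
  field_simp

set_option maxHeartbeats 1000000 in
lemma key (lam_e lam : ℝ) (hlam_e : 0 < lam_e) (hlam : 0 < lam)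
    (n L : ℕ) (β μ : ℝ) (hβ : 1 ≤ β) (hμ : 0 < μ)
    (hL0 : 0 < L) (hLn : L < n)
    (hLβ : (L : ℝ) ≤ β * ((n : ℝ) - L)) (hRβ : (n : ℝ) - (L : ℝ) ≤ β * L)
    (hμL : μ * n ≤ L) (hμR : μ * n ≤ (n : ℝ) - L) :
    ∀ k : ℕ, ∀ S : Finset (Fin n), Sᶜ.card = k → S.Nonempty →
      lam_e / lam * ((1 / (1 + β)) * Real.log ((n : ℝ) / S.card))
          ≤ vAge lam_e lam (biGraph n L) S ∧
      vAge lam_e lam (biGraph n L) S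
          ≤ lam_e / lam * ((1 + 2 / μ) + (4 * β) * Real.log ((n : ℝ) / S.card)) := by
  have hn0 : 0 < n := lt_of_le_of_lt (Nat.zero_le L) hLn
  have hnR : (0 : ℝ) < n := by exact_mod_cast hn0
  have hLR : (0 : ℝ) < L := by exact_mod_cast hL0
  have hRR : (0 : ℝ) < (n : ℝ) - L := by
    have : (L : ℝ) < n := by exact_mod_cast hLn
    linarith
  have hRne : ((n : ℝ) - L) ≠ 0 := ne_of_gt hRR
  have hLne : (L : ℝ) ≠ 0 := ne_of_gt hLR
  have hlamne : lam ≠ 0 := ne_of_gt hlam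
  have hlamene : lam_e ≠ 0 := ne_of_gt hlam_e
  have hμne : μ ≠ 0 := ne_of_gt hμ
  have hβne : (1 : ℝ) + β ≠ 0 := by positivity
  intro k
  induction k using Nat.strong_induction_on with
  | _ k ih =>
  intro S hk hS
  -- basic cardinality facts
  have hs0 : 0 < S.card := Finset.card_pos.mpr hS
  have hsn : S.card ≤ n := by
    have := Finset.card_le_univ S
    simpa using this
  set s := S.card with hsdef
  have hsR : (0 : ℝ) < s := by exact_mod_cast hs0
  have hsne : (s : ℝ) ≠ 0 := ne_of_gt hsR
  have hsnR : (s : ℝ) ≤ n := by exact_mod_cast hsn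
  set iS := (S.filter fun w : Fin n => w.val < L).card with hiSdef
  set jS := (S.filter fun w : Fin n => ¬ w.val < L).card with hjSdef
  have hijs : iS + jS = s :=
    Finset.card_filter_add_card_filter_not (s := S) (p := fun w : Fin n => w.val < L)
  set cL := (Sᶜ.filter fun w : Fin n => w.val < L).card with hcLdef
  set cR := (Sᶜ.filter fun w : Fin n => ¬ w.val < L).card with hcRdef
  have hiL : iS + cL = L := by
    have hdis : Disjoint (S.filter fun w : Fin n => w.val < L)
        (Sᶜ.filter fun w : Fin n => w.val < L) :=
      Finset.disjoint_filter_filter disjoint_compl_right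
    have hun : (S.filter fun w : Fin n => w.val < L) ∪ (Sᶜ.filter fun w : Fin n => w.val < L)
        = univ.filter fun w : Fin n => w.val < L := by
      rw [← Finset.filter_union, Finset.union_compl]
    have := Finset.card_union_of_disjoint hdis
    rw [hun, card_filter_lt n L hLn.le] at this
    omega
  have hjR : jS + cR = n - L := by
    have hdis : Disjoint (S.filter fun w : Fin n => ¬ w.val < L)
        (Sᶜ.filter fun w : Fin n => ¬ w.val < L) :=
      Finset.disjoint_filter_filter disjoint_compl_right
    have hun : (S.filter fun w : Fin n => ¬ w.val < L) ∪ (Sᶜ.filter fun w : Fin n => ¬ w.val < L)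
        = univ.filter fun w : Fin n => ¬ w.val < L := by
      rw [← Finset.filter_union, Finset.union_compl]
    have := Finset.card_union_of_disjoint hdis
    rw [hun, card_filter_not_lt n L hLn.le] at this
    omega
  -- the sum of rates over the complement
  have hsum : ∑ v ∈ Sᶜ, rate lam (biGraph n L) S v
      = (cL : ℝ) * (lam * jS / ((n : ℝ) - L)) + (cR : ℝ) * (lam * iS / L) := by
    rw [← Finset.sum_filter_add_sum_filter_not Sᶜ (fun v : Fin n => v.val < L)]
    congr 1
    · rw [Finset.sum_congr rfl (fun v hv => rate_left lam n L hLn S v (Finset.mem_filter.mp hv).2),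
        Finset.sum_const, nsmul_eq_mul]
    · rw [Finset.sum_congr rfl
        (fun v hv => rate_right_s3 lam n L hL0 hLn.le S v (Finset.mem_filter.mp hv).2),
        Finset.sum_const, nsmul_eq_mul]
  clear_value s iS jS cL cR
  have hrate0 : ∀ v : Fin n, 0 ≤ rate lam (biGraph n L) S v := by
    intro v
    rw [rate]
    split
    · exact le_refl 0
    · exact div_nonneg (mul_nonneg hlam.le (Nat.cast_nonneg _)) (Nat.cast_nonneg _)
  have hSr0 : 0 ≤ ∑ v ∈ Sᶜ, rate lam (biGraph n L) S v :=
    Finset.sum_nonneg fun v _ => hrate0 v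
  have hD : 0 < lam * (s : ℝ) / n + ∑ v ∈ Sᶜ, rate lam (biGraph n L) S v := by
    have : 0 < lam * (s : ℝ) / n := by positivity
    linarith
  -- log facts
  have hs1R : (1 : ℝ) ≤ s := by exact_mod_cast hs0
  have hlog_sub : Real.log ((n : ℝ) / s) - Real.log ((n : ℝ) / ((s : ℝ) + 1))
      = Real.log (((s : ℝ) + 1) / s) := by
    rw [Real.log_div (by positivity) (by positivity),
      Real.log_div (by positivity) (by positivity),
      Real.log_div (by positivity) (by positivity)]
    ring
  have hlq_le : Real.log (((s : ℝ) + 1) / s) ≤ 1 / s := by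
    have h := Real.log_le_sub_one_of_pos (show (0:ℝ) < ((s : ℝ) + 1) / s by positivity)
    have h2 : ((s : ℝ) + 1) / s - 1 = 1 / s := by field_simp; ring
    linarith
  have hlq_ge : 1 / ((s : ℝ) + 1) ≤ Real.log (((s : ℝ) + 1) / s) := by
    have h := Real.log_le_sub_one_of_pos (show (0:ℝ) < (s : ℝ) / ((s : ℝ) + 1) by positivity)
    have e : Real.log ((s : ℝ) / ((s : ℝ) + 1)) = - Real.log (((s : ℝ) + 1) / s) := by
      rw [← Real.log_inv]
      congr 1
      rw [inv_div]
    have h2 : (s : ℝ) / ((s : ℝ) + 1) - 1 = -(1 / ((s : ℝ) + 1)) := by field_simp; ring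
    rw [e, h2] at h
    linarith
  have hlq0 : 0 ≤ Real.log (((s : ℝ) + 1) / s) :=
    le_trans (by positivity) hlq_ge
  have hlr0 : 0 ≤ Real.log ((n : ℝ) / s) := by
    apply Real.log_nonneg
    rw [le_div_iff₀ hsR]
    linarith
  have hlr1' : 0 ≤ Real.log ((n : ℝ) / ((s : ℝ) + 1)) ∨ True := Or.inr trivial
  have hlr_small : (s : ℝ) / n * Real.log ((n : ℝ) / s) ≤ 1 := by
    have h := Real.log_le_sub_one_of_pos (show (0:ℝ) < (n : ℝ) / s by positivity)
    calc (s : ℝ) / n * Real.log ((n : ℝ) / s) ≤ (s : ℝ) / n * ((n : ℝ) / s - 1) :=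
          mul_le_mul_of_nonneg_left h (by positivity)
      _ = 1 - (s : ℝ) / n := by field_simp
      _ ≤ 1 := by
          have : 0 ≤ (s : ℝ) / n := by positivity
          linarith
  -- cast facts
  have hijR : (iS : ℝ) + jS = s := by exact_mod_cast hijs
  have hcLR : (cL : ℝ) = (L : ℝ) - iS := by
    have : (iS : ℝ) + cL = L := by exact_mod_cast hiL
    linarith
  have hcRR : (cR : ℝ) = ((n : ℝ) - L) - jS := by
    have h1 : (jS : ℝ) + cR = ((n - L : ℕ) : ℝ) := by exact_mod_cast hjR
    rw [Nat.cast_sub hLn.le] at h1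
    linarith
  have hiS0 : (0:ℝ) ≤ iS := Nat.cast_nonneg _
  have hjS0 : (0:ℝ) ≤ jS := Nat.cast_nonneg _
  -- upper bound for the rate sum
  have hSrup : ∑ v ∈ Sᶜ, rate lam (biGraph n L) S v ≤ lam * β * s := by
    rw [hsum]
    have h1 : (cL : ℝ) * (lam * jS / ((n : ℝ) - L)) ≤ lam * β * jS := by
      have hcl : (cL : ℝ) ≤ L := by rw [hcLR]; linarith
      calc (cL : ℝ) * (lam * jS / ((n : ℝ) - L)) ≤ (L : ℝ) * (lam * jS / ((n : ℝ) - L)) :=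
            mul_le_mul_of_nonneg_right hcl (by positivity)
        _ ≤ (β * ((n : ℝ) - L)) * (lam * jS / ((n : ℝ) - L)) :=
            mul_le_mul_of_nonneg_right hLβ (by positivity)
        _ = lam * β * jS := by field_simp
    have h2 : (cR : ℝ) * (lam * iS / L) ≤ lam * β * iS := by
      have hcr : (cR : ℝ) ≤ (n : ℝ) - L := by rw [hcRR]; linarith
      calc (cR : ℝ) * (lam * iS / L) ≤ ((n : ℝ) - L) * (lam * iS / L) :=
            mul_le_mul_of_nonneg_right hcr (by positivity)
        _ ≤ (β * L) * (lam * iS / L) :=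
            mul_le_mul_of_nonneg_right hRβ (by positivity)
        _ = lam * β * iS := by field_simp
    have h3 : lam * β * (iS : ℝ) + lam * β * (jS : ℝ) = lam * β * s := by
      rw [← hijR]; ring
    linarith [h1, h2, h3]
  -- induction hypothesis applied to extended sets
  have hIH : ∀ v ∈ Sᶜ,
      lam_e / lam * (1 / (1 + β) * Real.log ((n : ℝ) / ((s : ℝ) + 1)))
          ≤ vAge lam_e lam (biGraph n L) (insert v S) ∧
      vAge lam_e lam (biGraph n L) (insert v S)
          ≤ lam_e / lam * (1 + 2 / μ + 4 * β * Real.log ((n : ℝ) / ((s : ℝ) + 1))) := by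
    intro v hv
    have hvS : v ∉ S := by simpa using hv
    have hklt : (insert v S)ᶜ.card < k := by
      rw [Finset.compl_insert, ← hk]
      exact Finset.card_erase_lt_of_mem hv
    have hcard : ((insert v S).card : ℝ) = (s : ℝ) + 1 := by
      rw [Finset.card_insert_of_notMem hvS, ← hsdef]
      push_cast
      ring
    have h := ih _ hklt (insert v S) rfl (Finset.insert_nonempty v S)
    rw [hcard] at h
    exact h
  clear ih
  set Sr := ∑ v ∈ Sᶜ, rate lam (biGraph n L) S v with hSrdef
  clear_value Sr
  -- bounds for the numerator sum
  have hNumUp : ∑ v ∈ Sᶜ, rate lam (biGraph n L) S v * vAge lam_e lam (biGraph n L) (insert v S)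
      ≤ (lam_e / lam * (1 + 2 / μ + 4 * β * Real.log ((n : ℝ) / ((s : ℝ) + 1)))) * Sr := by
    calc ∑ v ∈ Sᶜ, rate lam (biGraph n L) S v * vAge lam_e lam (biGraph n L) (insert v S)
        ≤ ∑ v ∈ Sᶜ, rate lam (biGraph n L) S v *
            (lam_e / lam * (1 + 2 / μ + 4 * β * Real.log ((n : ℝ) / ((s : ℝ) + 1)))) :=
          Finset.sum_le_sum fun v hv => mul_le_mul_of_nonneg_left (hIH v hv).2 (hrate0 v)
      _ = (lam_e / lam * (1 + 2 / μ + 4 * β * Real.log ((n : ℝ) / ((s : ℝ) + 1)))) * Sr := by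
          rw [← Finset.sum_mul, ← hSrdef, mul_comm]
  have hNumLo : (lam_e / lam * (1 / (1 + β) * Real.log ((n : ℝ) / ((s : ℝ) + 1)))) * Sr
      ≤ ∑ v ∈ Sᶜ, rate lam (biGraph n L) S v * vAge lam_e lam (biGraph n L) (insert v S) := by
    calc (lam_e / lam * (1 / (1 + β) * Real.log ((n : ℝ) / ((s : ℝ) + 1)))) * Sr
        = ∑ v ∈ Sᶜ, rate lam (biGraph n L) S v *
            (lam_e / lam * (1 / (1 + β) * Real.log ((n : ℝ) / ((s : ℝ) + 1)))) := by
          rw [← Finset.sum_mul, ← hSrdef, mul_comm]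
      _ ≤ ∑ v ∈ Sᶜ, rate lam (biGraph n L) S v * vAge lam_e lam (biGraph n L) (insert v S) :=
          Finset.sum_le_sum fun v hv => mul_le_mul_of_nonneg_left (hIH v hv).1 (hrate0 v)
  clear hIH
  have hdiff0 : 0 ≤ Real.log ((n : ℝ) / s) - Real.log ((n : ℝ) / ((s : ℝ) + 1)) := by
    rw [hlog_sub]; exact hlq0
  -- the supersolution inequality
  have claimUp : lam_e ≤ (lam_e / lam * (1 + 2 / μ + 4 * β * Real.log ((n : ℝ) / s)))
        * (lam * (s : ℝ) / n)
      + (lam_e / lam * (4 * β)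
          * (Real.log ((n : ℝ) / s) - Real.log ((n : ℝ) / ((s : ℝ) + 1)))) * Sr := by
    have hPhis0 : 0 ≤ lam_e / lam * (1 + 2 / μ + 4 * β * Real.log ((n : ℝ) / s)) := by
      apply mul_nonneg (by positivity)
      have : 0 ≤ 4 * β * Real.log ((n : ℝ) / s) := mul_nonneg (by positivity) hlr0
      have h2 : (0:ℝ) ≤ 1 + 2 / μ := by positivity
      linarith
    by_cases hA : 2 * iS ≤ L ∧ 2 * jS ≤ n - L
    · -- boundary case : many uninfected neighbours, rate sum is large
      have hq : 1 / ((s : ℝ) + 1)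
          ≤ Real.log ((n : ℝ) / s) - Real.log ((n : ℝ) / ((s : ℝ) + 1)) := by
        rw [hlog_sub]; exact hlq_ge
      have hSrlo : lam * (s : ℝ) / (2 * β) ≤ Sr := by
        have hA1R : 2 * (iS : ℝ) ≤ L := by exact_mod_cast hA.1
        have hA2R : 2 * (jS : ℝ) ≤ (n : ℝ) - L := by
          have h2 : ((2 * jS : ℕ) : ℝ) ≤ ((n - L : ℕ) : ℝ) := Nat.cast_le.mpr hA.2
          rw [Nat.cast_sub hLn.le] at h2
          push_cast at h2
          linarith
        have hcl2 : (L : ℝ) / 2 ≤ (cL : ℝ) := by rw [hcLR]; linarith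
        have hcr2 : ((n : ℝ) - L) / 2 ≤ (cR : ℝ) := by rw [hcRR]; linarith
        have g1 : lam * (jS : ℝ) / (2 * β) ≤ (cL : ℝ) * (lam * jS / ((n : ℝ) - L)) := by
          have key1 : lam * (jS : ℝ) / (2 * β) ≤ (L : ℝ) / 2 * (lam * jS / ((n : ℝ) - L)) := by
            have e := aux6 (L : ℝ) lam (jS : ℝ) ((n : ℝ) - L) hRR
            rw [e, div_le_div_iff₀ (by positivity) (by positivity)]
            nlinarith only [mul_nonneg (mul_nonneg hlam.le hjS0) (sub_nonneg.mpr hRβ)]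
          calc lam * (jS : ℝ) / (2 * β) ≤ (L : ℝ) / 2 * (lam * jS / ((n : ℝ) - L)) := key1
            _ ≤ (cL : ℝ) * (lam * jS / ((n : ℝ) - L)) :=
                mul_le_mul_of_nonneg_right hcl2 (by positivity)
        have g2 : lam * (iS : ℝ) / (2 * β) ≤ (cR : ℝ) * (lam * iS / (L : ℝ)) := by
          have key2 : lam * (iS : ℝ) / (2 * β) ≤ ((n : ℝ) - L) / 2 * (lam * iS / (L : ℝ)) := by
            have e := aux6 ((n : ℝ) - L) lam (iS : ℝ) (L : ℝ) hLR
            rw [e, div_le_div_iff₀ (by positivity) (by positivity)]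
            nlinarith only [mul_nonneg (mul_nonneg hlam.le hiS0) (sub_nonneg.mpr hLβ)]
          calc lam * (iS : ℝ) / (2 * β) ≤ ((n : ℝ) - L) / 2 * (lam * iS / (L : ℝ)) := key2
            _ ≤ (cR : ℝ) * (lam * iS / (L : ℝ)) :=
                mul_le_mul_of_nonneg_right hcr2 (by positivity)
        have hsplit : lam * (jS : ℝ) / (2 * β) + lam * (iS : ℝ) / (2 * β)
            = lam * (s : ℝ) / (2 * β) := by rw [← hijR]; ring
        rw [hsum]
        linarith only [g1, g2, hsplit]
      have t1 : lam_e / lam * (4 * β) * (1 / ((s : ℝ) + 1)) * (lam * (s : ℝ) / (2 * β))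
          ≤ (lam_e / lam * (4 * β)
              * (Real.log ((n : ℝ) / s) - Real.log ((n : ℝ) / ((s : ℝ) + 1)))) * Sr := by
        apply mul_le_mul (mul_le_mul_of_nonneg_left hq (by positivity)) hSrlo (by positivity)
          (mul_nonneg (by positivity) hdiff0)
      have t2 : lam_e ≤ lam_e / lam * (4 * β) * (1 / ((s : ℝ) + 1)) * (lam * (s : ℝ) / (2 * β)) := by
        have e := aux1 lam_e lam β (s : ℝ) hlamne (by linarith) hsR
        rw [e]
        have h1 : (1 : ℝ) ≤ 2 * (s : ℝ) / ((s : ℝ) + 1) := by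
          rw [le_div_iff₀ (by positivity)]
          linarith
        nlinarith only [hlam_e.le, h1]
      have t3 : 0 ≤ (lam_e / lam * (1 + 2 / μ + 4 * β * Real.log ((n : ℝ) / s)))
          * (lam * (s : ℝ) / n) := mul_nonneg hPhis0 (by positivity)
      linarith only [t1, t2, t3]
    · -- interior case : the infected set is already large
      push_neg at hA
      have hs2 : μ * (n : ℝ) ≤ 2 * (s : ℝ) := by
        by_cases h1 : 2 * iS ≤ L
        · have h2 := hA h1
          have h3 : ((n - L : ℕ) : ℝ) < 2 * (jS : ℝ) := by exact_mod_cast h2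
          rw [Nat.cast_sub hLn.le] at h3
          have h4 : (jS : ℝ) ≤ s := by linarith only [hijR, hiS0]
          linarith only [h3, h4, hμR]
        · push_neg at h1
          have h3 : (L : ℝ) < 2 * (iS : ℝ) := by exact_mod_cast h1
          have h4 : (iS : ℝ) ≤ s := by linarith only [hijR, hjS0]
          linarith only [h3, h4, hμL]
      have hPhia : lam_e / lam * (1 + 2 / μ)
          ≤ lam_e / lam * (1 + 2 / μ + 4 * β * Real.log ((n : ℝ) / s)) := by
        have h5 : 0 ≤ 4 * β * Real.log ((n : ℝ) / s) := mul_nonneg (by positivity) hlr0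
        have h6 : (1 : ℝ) + 2 / μ ≤ 1 + 2 / μ + 4 * β * Real.log ((n : ℝ) / s) := by linarith only [h5]
        exact mul_le_mul_of_nonneg_left h6 (by positivity)
      have hl0 : lam * (μ / 2) ≤ lam * (s : ℝ) / n := by
        rw [le_div_iff₀ hnR]
        nlinarith only [mul_nonneg hlam.le (sub_nonneg.mpr hs2)]
      have t : (lam_e / lam * (1 + 2 / μ)) * (lam * (μ / 2))
          ≤ (lam_e / lam * (1 + 2 / μ + 4 * β * Real.log ((n : ℝ) / s)))
            * (lam * (s : ℝ) / n) :=
        mul_le_mul hPhia hl0 (by positivity) hPhis0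
      have t2 : lam_e ≤ (lam_e / lam * (1 + 2 / μ)) * (lam * (μ / 2)) := by
        have e := aux2 lam_e lam μ hlamne hμne
        rw [e]
        nlinarith only [mul_pos hlam_e hμ]
      have t4 : 0 ≤ (lam_e / lam * (4 * β)
          * (Real.log ((n : ℝ) / s) - Real.log ((n : ℝ) / ((s : ℝ) + 1)))) * Sr :=
        mul_nonneg (mul_nonneg (by positivity) hdiff0) hSr0
      linarith only [t, t2, t4]
  -- the subsolution inequality
  have claimLo : (lam_e / lam * (1 / (1 + β) * Real.log ((n : ℝ) / s))) * (lam * (s : ℝ) / n)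
      + (lam_e / lam * (1 / (1 + β))
          * (Real.log ((n : ℝ) / s) - Real.log ((n : ℝ) / ((s : ℝ) + 1)))) * Sr ≤ lam_e := by
    have hq' : Real.log ((n : ℝ) / s) - Real.log ((n : ℝ) / ((s : ℝ) + 1)) ≤ 1 / (s : ℝ) := by
      rw [hlog_sub]; exact hlq_le
    have u1 : (lam_e / lam * (1 / (1 + β) * Real.log ((n : ℝ) / s))) * (lam * (s : ℝ) / n)
        ≤ lam_e * (1 / (1 + β)) := by
      have e := aux3 lam_e lam β (s : ℝ) (n : ℝ) (Real.log ((n : ℝ) / s)) hlamne (ne_of_gt hnR) hβne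
      rw [e]
      calc (lam_e * (1 / (1 + β))) * ((s : ℝ) / n * Real.log ((n : ℝ) / s))
          ≤ (lam_e * (1 / (1 + β))) * 1 := mul_le_mul_of_nonneg_left hlr_small (by positivity)
        _ = lam_e * (1 / (1 + β)) := mul_one _
    have u2 : (lam_e / lam * (1 / (1 + β))
        * (Real.log ((n : ℝ) / s) - Real.log ((n : ℝ) / ((s : ℝ) + 1)))) * Sr
        ≤ lam_e * (1 / (1 + β)) * β := by
      calc (lam_e / lam * (1 / (1 + β))
          * (Real.log ((n : ℝ) / s) - Real.log ((n : ℝ) / ((s : ℝ) + 1)))) * Sr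
          ≤ (lam_e / lam * (1 / (1 + β)) * (1 / (s : ℝ))) * (lam * β * s) :=
            mul_le_mul (mul_le_mul_of_nonneg_left hq' (by positivity)) hSrup hSr0 (by positivity)
        _ = lam_e * (1 / (1 + β)) * β := aux4 lam_e lam β (s : ℝ) hlamne hsne hβne
    have efin := aux5 lam_e β hβne
    linarith only [u1, u2, efin]
  -- put everything together
  constructor
  · rw [vAge_eq, ← hsdef, ← hSrdef, le_div_iff₀ hD]
    have expandlo : (lam_e / lam * (1 / (1 + β) * Real.log ((n : ℝ) / s)))
          * (lam * (s : ℝ) / n + Sr)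
        - (lam_e / lam * (1 / (1 + β) * Real.log ((n : ℝ) / ((s : ℝ) + 1)))) * Sr
        = (lam_e / lam * (1 / (1 + β) * Real.log ((n : ℝ) / s))) * (lam * (s : ℝ) / n)
          + (lam_e / lam * (1 / (1 + β))
              * (Real.log ((n : ℝ) / s) - Real.log ((n : ℝ) / ((s : ℝ) + 1)))) * Sr := by
      ring
    linarith only [claimLo, hNumLo, expandlo]
  · rw [vAge_eq, ← hsdef, ← hSrdef, div_le_iff₀ hD]
    have expandup : (lam_e / lam * (1 + 2 / μ + 4 * β * Real.log ((n : ℝ) / s)))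
          * (lam * (s : ℝ) / n + Sr)
        - (lam_e / lam * (1 + 2 / μ + 4 * β * Real.log ((n : ℝ) / ((s : ℝ) + 1)))) * Sr
        = (lam_e / lam * (1 + 2 / μ + 4 * β * Real.log ((n : ℝ) / s))) * (lam * (s : ℝ) / n)
          + (lam_e / lam * (4 * β)
              * (Real.log ((n : ℝ) / s) - Real.log ((n : ℝ) / ((s : ℝ) + 1)))) * Sr := by
      ring
    linarith only [claimUp, hNumUp, expandup]

/-- If `|L| = ⌊c₀·n⌋` with `c₀ ∈ (0,1/2)`, every right vertex of
`K_{L,R}` has version age `Θ(log n)`. -/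
theorem stmt_3 (lam_e lam : ℝ) (hlam_e : 0 < lam_e) (hlam : 0 < lam)
    (c₀ : ℝ) (hc₀0 : 0 < c₀) (hc₀1 : c₀ < 1 / 2) :
    ∃ c C : ℝ, 0 < c ∧ 0 < C ∧ ∃ N : ℕ, ∀ n : ℕ, N ≤ n →
      ∀ j : Fin n, ⌊c₀ * (n : ℝ)⌋₊ ≤ j.val →
        c * Real.log n ≤ vAge lam_e lam (biGraph n ⌊c₀ * (n : ℝ)⌋₊) {j} ∧
        vAge lam_e lam (biGraph n ⌊c₀ * (n : ℝ)⌋₊) {j} ≤ C * Real.log n := by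
  refine ⟨lam_e / lam * (1 / (1 + 2 / c₀)),
    lam_e / lam * (1 + 2 / (c₀ / 2) + 4 * (2 / c₀)), by positivity, by positivity,
    ⟨⌈3 / c₀⌉₊ + 3, ?_⟩⟩
  intro n hn j _
  have hn3 : 3 ≤ n := by omega
  have hnR : (0 : ℝ) < n := by
    have : (0:ℕ) < n := by omega
    exact_mod_cast this
  have hn3R : (3 : ℝ) ≤ n := by exact_mod_cast hn3
  have hceil : (3 : ℝ) / c₀ ≤ n := by
    calc (3 : ℝ) / c₀ ≤ (⌈3 / c₀⌉₊ : ℝ) := Nat.le_ceil _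
      _ ≤ n := by exact_mod_cast (by omega : ⌈3 / c₀⌉₊ ≤ n)
  have hc3 : (3 : ℝ) ≤ c₀ * n := by
    rw [div_le_iff₀ hc₀0] at hceil
    linarith
  set L := ⌊c₀ * (n : ℝ)⌋₊ with hLdef
  have hLle : (L : ℝ) ≤ c₀ * n := Nat.floor_le (by positivity)
  have hLgt : c₀ * n - 1 < (L : ℝ) := Nat.sub_one_lt_floor _
  have hL0 : 0 < L := by
    have : (0 : ℝ) < L := by linarith
    exact_mod_cast this
  have hLn : L < n := by
    have h1 : (L : ℝ) < n := by nlinarith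
    exact_mod_cast h1
  have hLhalf : c₀ * n / 2 ≤ (L : ℝ) := by linarith
  have hRhalf : (n : ℝ) / 2 ≤ (n : ℝ) - L := by nlinarith
  have hβ : (1 : ℝ) ≤ 2 / c₀ := by
    rw [le_div_iff₀ hc₀0]
    linarith
  have hβ0 : (0 : ℝ) < 2 / c₀ := by positivity
  have hLβ : (L : ℝ) ≤ 2 / c₀ * ((n : ℝ) - L) := by
    have h1 : 2 / c₀ * ((n : ℝ) / 2) ≤ 2 / c₀ * ((n : ℝ) - L) :=
      mul_le_mul_of_nonneg_left hRhalf hβ0.le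
    have h2 : 2 / c₀ * ((n : ℝ) / 2) = n / c₀ := by ring
    have h3 : (n : ℝ) ≤ n / c₀ := by
      rw [le_div_iff₀ hc₀0]
      nlinarith
    have h4 : (L : ℝ) ≤ n := by nlinarith
    linarith
  have hRβ : (n : ℝ) - L ≤ 2 / c₀ * L := by
    have h1 : 2 / c₀ * (c₀ * n / 2) ≤ 2 / c₀ * (L : ℝ) :=
      mul_le_mul_of_nonneg_left hLhalf hβ0.le
    have h2 : 2 / c₀ * (c₀ * (n : ℝ) / 2) = n := by
      field_simp
    linarith
  have hμL : c₀ / 2 * n ≤ (L : ℝ) := by linarith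
  have hμR : c₀ / 2 * n ≤ (n : ℝ) - L := by nlinarith
  obtain ⟨hlo, hup⟩ := key lam_e lam hlam_e hlam n L (2 / c₀) (c₀ / 2) hβ (by positivity)
    hL0 hLn hLβ hRβ hμL hμR (({j} : Finset (Fin n))ᶜ.card) {j} rfl (Finset.singleton_nonempty j)
  have hcard1 : ((({j} : Finset (Fin n)).card : ℝ)) = 1 := by simp
  rw [hcard1, div_one] at hlo hup
  have hlog1 : 1 ≤ Real.log n := by
    rw [Real.le_log_iff_exp_le hnR]
    have h1 := Real.exp_one_lt_d9
    linarith
  constructor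
  · linarith only [hlo]
  · have hmono : lam_e / lam * (1 + 2 / (c₀ / 2) + 4 * (2 / c₀) * Real.log n)
        ≤ lam_e / lam * ((1 + 2 / (c₀ / 2) + 4 * (2 / c₀)) * Real.log n) := by
      apply mul_le_mul_of_nonneg_left _ (by positivity)
      have h1 : (0 : ℝ) < 1 + 2 / (c₀ / 2) := by positivity
      nlinarith only [mul_nonneg h1.le (sub_nonneg.mpr hlog1)]
    linarith only [hup, hmono]
end

section
/- Fix an integer d ≥ 3 and a constant c_d with 0 < c_d < 1/2. There exists a constant C > 0 (depending on d, c_d, λ_e and λ) such that the following holds for every n ≥ 2: if G is a d-regular simple graph on n vertices whose edge expansion satisfies h(G) ≥ c_d·d, i.e. |∂S| ≥ c_d·d·|S| for every nonempty S with |S| ≤ n/2, then every vertex i of G satisfies v_G({i}) ≤ C·log n. -/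
open Finset
open scoped Classical

/-- auxiliary bound sequence -/
noncomputable def uB (cd : ℝ) (n k : ℕ) : ℝ := 2 + cd⁻¹ * ∑ j ∈ Finset.Icc k n, ((j : ℝ))⁻¹

lemma two_le_uB {cd : ℝ} (hcd : 0 < cd) (n k : ℕ) : 2 ≤ uB cd n k := by
  have h : 0 ≤ ∑ j ∈ Finset.Icc k n, ((j : ℝ))⁻¹ :=
    Finset.sum_nonneg fun j _ => by positivity
  have : 0 ≤ cd⁻¹ * ∑ j ∈ Finset.Icc k n, ((j : ℝ))⁻¹ := by positivity
  simp only [uB]; linarith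

lemma uB_mono {cd : ℝ} (hcd : 0 < cd) (n k : ℕ) : uB cd n (k + 1) ≤ uB cd n k := by
  simp only [uB]
  have hsub : Finset.Icc (k+1) n ⊆ Finset.Icc k n := by
    apply Finset.Icc_subset_Icc_left; omega
  have hsum : ∑ j ∈ Finset.Icc (k+1) n, ((j:ℝ))⁻¹ ≤ ∑ j ∈ Finset.Icc k n, ((j:ℝ))⁻¹ :=
    Finset.sum_le_sum_of_subset_of_nonneg hsub (fun j _ _ => by positivity)
  have hcd' : 0 ≤ cd⁻¹ := by positivity
  nlinarith

lemma uB_succ {cd : ℝ} (hcd : 0 < cd) {n k : ℕ} (hk1 : 1 ≤ k) (hkn : k ≤ n) :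
    uB cd n k = uB cd n (k + 1) + (cd * (k : ℝ))⁻¹ := by
  have hmem : k ∈ Finset.Icc k n := by simp [hkn]
  have hsplit : ∑ j ∈ Finset.Icc k n, ((j : ℝ))⁻¹
      = ∑ j ∈ Finset.Icc (k+1) n, ((j : ℝ))⁻¹ + ((k : ℝ))⁻¹ := by
    rw [← Finset.sum_erase_add _ _ hmem, Finset.Icc_erase_left, ← Finset.Icc_add_one_left_eq_Ioc]
  simp only [uB, hsplit]
  have hk0 : ((k : ℝ)) ≠ 0 := by positivity
  field_simp
  ring

lemma boundary_eq {n : ℕ} (G : SimpleGraph (Fin n)) (S : Finset (Fin n)) :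
    ∑ i ∈ Sᶜ, (G.neighborFinset i ∩ S).card = edgeBoundary G S := by
  have h1 : ∀ i : Fin n, (G.neighborFinset i ∩ S).card
      = ∑ j ∈ S, if G.Adj i j then 1 else 0 := by
    intro i
    rw [← Finset.card_filter]
    congr 1
    ext j
    simp [SimpleGraph.mem_neighborFinset, and_comm]
  have h2 : ∀ i : Fin n, ((G.neighborFinset i).filter fun j => j ∉ S).card
      = ∑ j ∈ Sᶜ, if G.Adj i j then 1 else 0 := by
    intro i
    rw [← Finset.card_filter]
    congr 1
    ext j
    simp [SimpleGraph.mem_neighborFinset, and_comm]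
  simp only [edgeBoundary, h1, h2]
  rw [Finset.sum_comm]
  refine Finset.sum_congr rfl fun j _ => Finset.sum_congr rfl fun i _ => ?_
  simp [G.adj_comm]

lemma mainBound (lam_e lam : ℝ) (hlam_e : 0 < lam_e) (hlam : 0 < lam)
    (cd : ℝ) (hcd0 : 0 < cd) {n : ℕ} (hn : 2 ≤ n) (d : ℕ) (hd : 3 ≤ d)
    (G : SimpleGraph (Fin n)) (hreg : G.IsRegularOfDegree d)
    (hexp : ∀ S : Finset (Fin n), S.Nonempty → (S.card : ℝ) ≤ (n : ℝ) / 2 →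
        cd * (d : ℝ) * (S.card : ℝ) ≤ (edgeBoundary G S : ℝ))
    (S : Finset (Fin n)) (hS : S.Nonempty) :
    lam * vAge lam_e lam G S ≤ lam_e * uB cd n S.card := by
  have hk1 : 1 ≤ S.card := Finset.card_pos.mpr hS
  have hn0 : (0 : ℝ) < n := by positivity
  have hd0 : (0 : ℝ) < d := by positivity
  have hrate : ∀ i : Fin n, 0 ≤ rate lam G S i := by
    intro i
    unfold rate
    split
    · exact le_rfl
    · positivity
  set A : ℝ := ∑ i ∈ Sᶜ, rate lam G S i with hA
  have hA0 : 0 ≤ A := Finset.sum_nonneg fun i _ => hrate i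
  have hq0 : 0 ≤ lam * (S.card : ℝ) / n := by positivity
  have hqpos : 0 < lam * (S.card : ℝ) / n := by
    have : (0:ℝ) < S.card := by exact_mod_cast hk1
    positivity
  have hden : 0 < lam * (S.card : ℝ) / n + A := by linarith
  set u' : ℝ := uB cd n (S.card + 1) with hu'
  have hu'0 : 0 ≤ u' := le_trans (by norm_num) (two_le_uB hcd0 n (S.card + 1))
  -- bound the numerator sum
  have hNum : ∑ i ∈ Sᶜ.attach, rate lam G S i.1 * vAge lam_e lam G (insert i.1 S)
      ≤ A * (lam_e / lam * u') := by
    have hAatt : A = ∑ i ∈ Sᶜ.attach, rate lam G S i.1 := (Finset.sum_attach _ _).symm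
    rw [hAatt, Finset.sum_mul]
    apply Finset.sum_le_sum
    intro i _
    have hmem : i.1 ∉ S := Finset.mem_compl.mp i.2
    have hrec := mainBound lam_e lam hlam_e hlam cd hcd0 hn d hd G hreg hexp
      (insert i.1 S) (Finset.insert_nonempty _ _)
    rw [Finset.card_insert_of_notMem hmem] at hrec
    have hv : vAge lam_e lam G (insert i.1 S) ≤ lam_e / lam * u' := by
      rw [div_mul_eq_mul_div, le_div_iff₀ hlam]
      linarith
    exact mul_le_mul_of_nonneg_left hv (hrate i.1)
  -- the core inequality
  have core : lam + A * u' ≤ uB cd n S.card * (lam * (S.card : ℝ) / n + A) := by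
    by_cases hcase : 2 * S.card ≤ n
    · -- expansion regime
      have hhalf : ((S.card : ℝ)) ≤ (n : ℝ) / 2 := by
        have : ((2 * S.card : ℕ) : ℝ) ≤ (n : ℝ) := by exact_mod_cast hcase
        push_cast at this
        linarith
      have hEB := hexp S hS hhalf
      have hAeq : A = lam / d * ((edgeBoundary G S : ℕ) : ℝ) := by
        rw [hA, ← boundary_eq G S]
        push_cast
        rw [Finset.mul_sum]
        apply Finset.sum_congr rfl
        intro i _
        have hdi : G.degree i = d := hreg i
        have hdne : G.degree i ≠ 0 := by omega
        rw [rate, if_neg hdne, hdi]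
        ring
      have hAk : lam * (cd * (S.card : ℝ)) ≤ A := by
        rw [hAeq]
        calc lam * (cd * (S.card : ℝ)) = lam / d * (cd * d * S.card) := by
              field_simp
          _ ≤ lam / d * (edgeBoundary G S : ℝ) :=
              mul_le_mul_of_nonneg_left hEB (by positivity)
      have hkn : S.card ≤ n := by omega
      rw [uB_succ hcd0 hk1 hkn]
      have hck : (0:ℝ) < cd * S.card := by
        have : (0:ℝ) < S.card := by exact_mod_cast hk1
        positivity
      have hs0 : 0 ≤ (cd * (S.card : ℝ))⁻¹ := by positivity
      have h1 : lam ≤ A * (cd * (S.card : ℝ))⁻¹ := by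
        rw [← div_eq_mul_inv, le_div_iff₀ hck]
        linarith [hAk]
      nlinarith [mul_nonneg hu'0 hq0, mul_nonneg hs0 hq0, mul_nonneg hs0 hA0]
    · -- large-set regime
      have hmono : u' ≤ uB cd n S.card := uB_mono hcd0 n S.card
      have hge2 : 2 ≤ uB cd n S.card := two_le_uB hcd0 n S.card
      have hnk : (n : ℝ) ≤ 2 * S.card := by
        have : n ≤ 2 * S.card := by omega
        exact_mod_cast this
      have h2q : lam ≤ 2 * (lam * (S.card : ℝ) / n) := by
        rw [show 2 * (lam * (S.card : ℝ) / n) = 2 * (lam * (S.card : ℝ)) / n from by ring,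
          le_div_iff₀ hn0]
        nlinarith
      nlinarith [mul_le_mul_of_nonneg_right hge2 hq0,
        mul_le_mul_of_nonneg_left hmono hA0]
  -- assemble
  rw [vAge, ← mul_div_assoc, div_le_iff₀ hden]
  have hstep : lam * (lam_e + ∑ i ∈ Sᶜ.attach,
      rate lam G S i.1 * vAge lam_e lam G (insert i.1 S)) ≤ lam_e * (lam + A * u') := by
    have h1 := mul_le_mul_of_nonneg_left hNum hlam.le
    have h2 : lam * (A * (lam_e / lam * u')) = lam_e * (A * u') := by
      field_simp
    nlinarith
  calc lam * (lam_e + ∑ i ∈ Sᶜ.attach,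
        rate lam G S i.1 * vAge lam_e lam G (insert i.1 S))
      ≤ lam_e * (lam + A * u') := hstep
    _ ≤ lam_e * (uB cd n S.card * (lam * (S.card : ℝ) / n + A)) :=
        mul_le_mul_of_nonneg_left core hlam_e.le
    _ = lam_e * uB cd n S.card * (lam * (S.card : ℝ) / n + A) := by ring
termination_by Sᶜ.card
decreasing_by
  have hi := i.2
  rw [Finset.compl_insert]
  exact Finset.card_erase_lt_of_mem hi

/-- For fixed `d ≥ 3` and `0 < c_d < 1/2`, any `d`-regular graph
with edge expansion at least `c_d·d` has all single-vertex version ages `O(log n)`. -/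
theorem stmt_10 (lam_e lam : ℝ) (hlam_e : 0 < lam_e) (hlam : 0 < lam)
    (d : ℕ) (hd : 3 ≤ d) (cd : ℝ) (hcd0 : 0 < cd) (hcd1 : cd < 1 / 2) :
    ∃ C : ℝ, 0 < C ∧ ∀ n : ℕ, 2 ≤ n → ∀ G : SimpleGraph (Fin n),
      G.IsRegularOfDegree d →
      (∀ S : Finset (Fin n), S.Nonempty → (S.card : ℝ) ≤ (n : ℝ) / 2 →
        cd * (d : ℝ) * (S.card : ℝ) ≤ (edgeBoundary G S : ℝ)) →
      ∀ i : Fin n, vAge lam_e lam G {i} ≤ C * Real.log n := by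
  have hlog2 : 0 < Real.log 2 := Real.log_pos (by norm_num)
  have hcdi : 0 < cd⁻¹ := by positivity
  set C' : ℝ := (2 + cd⁻¹) / Real.log 2 + cd⁻¹ with hC'
  have hC'0 : 0 < C' := by
    have : 0 < (2 + cd⁻¹) / Real.log 2 := by positivity
    rw [hC']
    linarith
  refine ⟨lam_e / lam * C', by positivity, ?_⟩
  intro n hn G hreg hexp i
  have hmain := mainBound lam_e lam hlam_e hlam cd hcd0 hn d hd G hreg hexp
    {i} (Finset.singleton_nonempty i)
  rw [Finset.card_singleton] at hmain
  have hL : Real.log 2 ≤ Real.log n := Real.log_le_log (by norm_num) (by exact_mod_cast hn)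
  have hL0 : 0 < Real.log n := lt_of_lt_of_le hlog2 hL
  have hharm : ∑ j ∈ Finset.Icc 1 n, ((j : ℝ))⁻¹ = (harmonic n : ℝ) := by
    rw [harmonic]
    push_cast
    rw [← Finset.Ico_add_one_right_eq_Icc, Finset.sum_Ico_eq_sum_range]
    simp [add_comm]
  have hH : (harmonic n : ℝ) ≤ 1 + Real.log n := harmonic_le_one_add_log n
  have huB : uB cd n 1 ≤ C' * Real.log n := by
    have h1 : uB cd n 1 ≤ 2 + cd⁻¹ * (1 + Real.log n) := by
      rw [uB, hharm]
      nlinarith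
    have h2 : (2 + cd⁻¹) * Real.log 2 ≤ (2 + cd⁻¹) * Real.log n :=
      mul_le_mul_of_nonneg_left hL (by positivity)
    have h3 : 2 + cd⁻¹ ≤ (2 + cd⁻¹) / Real.log 2 * Real.log n := by
      rw [div_mul_eq_mul_div, le_div_iff₀ hlog2]
      linarith
    rw [hC']
    nlinarith
  have hfin : lam * vAge lam_e lam G {i} ≤ lam * (lam_e / lam * C' * Real.log n) := by
    have heq : lam * (lam_e / lam * C' * Real.log n) = lam_e * (C' * Real.log n) := by
      field_simp
    calc lam * vAge lam_e lam G {i} ≤ lam_e * uB cd n 1 := hmain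
      _ ≤ lam_e * (C' * Real.log n) := mul_le_mul_of_nonneg_left huB hlam_e.le
      _ = lam * (lam_e / lam * C' * Real.log n) := heq.symm
  exact le_of_mul_le_mul_left hfin hlam
end
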